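/- arXiv:0711.2819 — 2 statements merged into one kernel-verified Lean document; each statement's English description precedes it below -/
import Mathlib

section
/- For pairwise distinct indeterminates u₁,…,uₙ and q, one has Σ_{k=1}^{n} ∏_{j≠k} (q u_k − q⁻¹ u_j)/(u_k − u_j) = [n]_q, where [n]_q = (qⁿ − q⁻ⁿ)/(q − q⁻¹). -/
open Finset

/-- The field of rational functions `ℚ(q, u₁,…,uₙ)`. -/
abbrev Kqu (n : ℕ) : Type := FractionRing (MvPolynomial (Option (Fin n)) ℚ)

noncomputable def qgen (n : ℕ) : Kqu n :=
  algebraMap (MvPolynomial (Option (Fin n)) ℚ) (Kqu n) (MvPolynomial.X none)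

noncomputable def ugen (n : ℕ) (i : Fin n) : Kqu n :=
  algebraMap (MvPolynomial (Option (Fin n)) ℚ) (Kqu n) (MvPolynomial.X (some i))

section Key
open Polynomial

theorem sum_ratios_key {K : Type*} [Field K] (n : ℕ) (q : K) (v : Fin n → K)
    (hq : q ≠ 0) (hq2 : q - q⁻¹ ≠ 0) (hv0 : ∀ i, v i ≠ 0)
    (hinj : Function.Injective v) :
    (∑ k : Fin n, ∏ j ∈ Finset.univ.erase k,
        (q * v k - q⁻¹ * v j) / (v k - v j)) =
      (q ^ n - q⁻¹ ^ n) / (q - q⁻¹) := by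
  classical
  obtain _ | m := n
  · simp
  set p1 : Polynomial K := ∏ j : Fin (m + 1), (X - C (q⁻¹ ^ 2 * v j)) with hp1
  set p2 : Polynomial K := ∏ j : Fin (m + 1), (X - C (v j)) with hp2
  have hm1 : p1.Monic := monic_prod_of_monic _ _ fun j _ => monic_X_sub_C _
  have hm2 : p2.Monic := monic_prod_of_monic _ _ fun j _ => monic_X_sub_C _
  have hd1 : p1.natDegree = m + 1 := by
    rw [hp1, natDegree_prod _ _ fun j _ => X_sub_C_ne_zero _]
    simp only [natDegree_X_sub_C, sum_const, card_univ, Fintype.card_fin, smul_eq_mul, mul_one]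
  have hd2 : p2.natDegree = m + 1 := by
    rw [hp2, natDegree_prod _ _ fun j _ => X_sub_C_ne_zero _]
    simp only [natDegree_X_sub_C, sum_const, card_univ, Fintype.card_fin, smul_eq_mul, mul_one]
  have hlt : (p1 - p2).degree < ((univ : Finset (Fin (m + 1))).card : ℕ) := by
    rw [card_univ, Fintype.card_fin]
    have h : (p1 - p2).degree < p1.degree := degree_sub_lt
      (by rw [degree_eq_natDegree hm1.ne_zero, degree_eq_natDegree hm2.ne_zero, hd1, hd2])
      hm1.ne_zero (by rw [hm1.leadingCoeff, hm2.leadingCoeff])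
    rwa [degree_eq_natDegree hm1.ne_zero, hd1] at h
  have hinterp := Lagrange.eq_interpolate (v := v) (s := univ) hinj.injOn hlt
  have hE := congrArg (Polynomial.eval 0) hinterp
  simp only [Lagrange.interpolate_apply, Lagrange.basis, Lagrange.basisDivisor,
    eval_finset_sum, eval_mul, eval_C, eval_prod, eval_sub, eval_X, hp1, hp2] at hE
  have hz : ∀ x : Fin (m + 1), ∏ j : Fin (m + 1), (v x - v j) = 0 := fun x =>
    Finset.prod_eq_zero (mem_univ x) (by simp)
  simp only [zero_sub, hz, sub_zero] at hE
  set c : K := (-1 : K) ^ m * ((q - q⁻¹) * q⁻¹ ^ (m + 1)) * ∏ j : Fin (m + 1), v j with hc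
  have hterm : ∀ k : Fin (m + 1),
      (∏ j : Fin (m + 1), (v k - q⁻¹ ^ 2 * v j)) *
          ∏ j ∈ univ.erase k, ((v k - v j)⁻¹ * -(v j)) =
        c * ∏ j ∈ univ.erase k, ((q * v k - q⁻¹ * v j) / (v k - v j)) := by
    intro k
    have h1 : q * q⁻¹ = 1 := mul_inv_cancel₀ hq
    calc (∏ j : Fin (m + 1), (v k - q⁻¹ ^ 2 * v j)) *
          ∏ j ∈ univ.erase k, ((v k - v j)⁻¹ * -(v j))
        = (v k - q⁻¹ ^ 2 * v k) *
            ∏ j ∈ univ.erase k, ((v k - q⁻¹ ^ 2 * v j) * ((v k - v j)⁻¹ * -(v j))) := by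
          rw [← Finset.mul_prod_erase univ (fun j => v k - q⁻¹ ^ 2 * v j) (mem_univ k),
            mul_assoc, ← Finset.prod_mul_distrib]
      _ = (v k - q⁻¹ ^ 2 * v k) *
            ∏ j ∈ univ.erase k, (((-1) * q⁻¹ * v j) * ((q * v k - q⁻¹ * v j) / (v k - v j))) := by
          refine congrArg _ (Finset.prod_congr rfl fun j hj => ?_)
          have hne : v k - v j ≠ 0 :=
            sub_ne_zero.mpr fun h => (mem_erase.mp hj).1 (hinj h).symm
          field_simp
      _ = (v k - q⁻¹ ^ 2 * v k) * (((-1) * q⁻¹) ^ m * ∏ j ∈ univ.erase k, v j) *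
            ∏ j ∈ univ.erase k, ((q * v k - q⁻¹ * v j) / (v k - v j)) := by
          rw [Finset.prod_mul_distrib]
          have : ∏ j ∈ univ.erase k, ((-1 : K) * q⁻¹ * v j) =
              ((-1) * q⁻¹) ^ m * ∏ j ∈ univ.erase k, v j := by
            rw [Finset.prod_mul_distrib, Finset.prod_const,
              card_erase_of_mem (mem_univ k), card_univ, Fintype.card_fin]
            simp
          rw [this]; ring
      _ = c * ∏ j ∈ univ.erase k, ((q * v k - q⁻¹ * v j) / (v k - v j)) := by
          rw [hc, ← Finset.mul_prod_erase univ v (mem_univ k)]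
          set S := ∏ j ∈ univ.erase k, ((q * v k - q⁻¹ * v j) / (v k - v j))
          set Pe := ∏ j ∈ univ.erase k, v j
          linear_combination (-((-1 : K) ^ m * q⁻¹ ^ m * v k * Pe * S)) * h1
  have hsum : (∑ x : Fin (m + 1),
      (∏ j : Fin (m + 1), (v x - q⁻¹ ^ 2 * v j)) *
        ∏ j ∈ univ.erase x, ((v x - v j)⁻¹ * -(v j))) =
      c * ∑ k : Fin (m + 1), ∏ j ∈ univ.erase k, ((q * v k - q⁻¹ * v j) / (v k - v j)) := by
    rw [Finset.mul_sum]
    exact Finset.sum_congr rfl fun k _ => hterm k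
  rw [hsum] at hE
  have hP : (∏ j : Fin (m + 1), v j) ≠ 0 := Finset.prod_ne_zero_iff.mpr fun j _ => hv0 j
  have hcne : c ≠ 0 := by
    rw [hc]
    exact mul_ne_zero (mul_ne_zero (pow_ne_zero _ (by norm_num))
      (mul_ne_zero hq2 (pow_ne_zero _ (inv_ne_zero hq)))) hP
  rw [eq_div_iff hq2]
  apply mul_left_cancel₀ hcne
  rw [← mul_assoc, ← hE]
  have hL1 : (∏ x : Fin (m + 1), -(q⁻¹ ^ 2 * v x)) =
      (-1 : K) ^ (m + 1) * (q⁻¹ ^ (m + 1) * q⁻¹ ^ (m + 1)) * ∏ x : Fin (m + 1), v x := by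
    calc (∏ x : Fin (m + 1), -(q⁻¹ ^ 2 * v x))
        = ∏ x : Fin (m + 1), (((-1 : K) * (q⁻¹ * q⁻¹)) * v x) :=
          Finset.prod_congr rfl (by intros; ring)
      _ = ((-1 : K) * (q⁻¹ * q⁻¹)) ^ (m + 1) * ∏ x : Fin (m + 1), v x := by
          rw [Finset.prod_mul_distrib, Finset.prod_const, card_univ, Fintype.card_fin]
      _ = _ := by rw [mul_pow, mul_pow]
  have hL2 : (∏ x : Fin (m + 1), -(v x)) =
      (-1 : K) ^ (m + 1) * ∏ x : Fin (m + 1), v x := by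
    calc (∏ x : Fin (m + 1), -(v x))
        = ∏ x : Fin (m + 1), ((-1 : K) * v x) := Finset.prod_congr rfl (by intros; ring)
      _ = ((-1 : K)) ^ (m + 1) * ∏ x : Fin (m + 1), v x := by
          rw [Finset.prod_mul_distrib, Finset.prod_const, card_univ, Fintype.card_fin]
  rw [hL1, hL2, hc]
  have h1pow : q ^ (m + 1) * q⁻¹ ^ (m + 1) = 1 := by
    rw [← mul_pow, mul_inv_cancel₀ hq, one_pow]
  linear_combination ((-1 : K) ^ (m + 1) * (q - q⁻¹) * (∏ x : Fin (m + 1), v x)) * h1pow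

end Key

/-- `Σ_k ∏_{j≠k} (q u_k − q⁻¹ u_j)/(u_k − u_j) = [n]_q`. -/
theorem sum_ratios_eq_qint (n : ℕ) :
    (∑ k : Fin n, ∏ j ∈ Finset.univ.erase k,
        (qgen n * ugen n k - (qgen n)⁻¹ * ugen n j) / (ugen n k - ugen n j)) =
      (qgen n ^ n - (qgen n)⁻¹ ^ n) / (qgen n - (qgen n)⁻¹) := by
  have hinj0 := IsFractionRing.injective (MvPolynomial (Option (Fin n)) ℚ) (Kqu n)
  have hq : qgen n ≠ 0 := by
    intro h
    exact MvPolynomial.X_ne_zero none (hinj0 (h.trans (map_zero _).symm))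
  have hu : ∀ i, ugen n i ≠ 0 := by
    intro i h
    exact MvPolynomial.X_ne_zero (some i) (hinj0 (h.trans (map_zero _).symm))
  have huinj : Function.Injective (ugen n) := fun i j h =>
    Option.some_injective _ (MvPolynomial.X_injective (hinj0 h))
  have hq2 : qgen n - (qgen n)⁻¹ ≠ 0 := by
    intro h
    have h0 : qgen n = (qgen n)⁻¹ := sub_eq_zero.mp h
    have h1 : qgen n * qgen n = 1 := by
      nth_rewrite 1 [h0]
      exact inv_mul_cancel₀ hq
    have h2 : (MvPolynomial.X none * MvPolynomial.X none :
        MvPolynomial (Option (Fin n)) ℚ) = 1 := by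
      apply hinj0
      rw [map_mul, map_one]
      exact h1
    have h3 := congrArg (MvPolynomial.eval (fun _ => (2 : ℚ))) h2
    simp at h3
    norm_num at h3
  exact sum_ratios_key n (qgen n) (ugen n) hq hq2 hu huinj
end

section
/- For indeterminates u₁,…,uₙ and q, Σ_{σ∈Sₙ} ∏_{1≤i<j≤n} (q u_{σ(i)} − q⁻¹ u_{σ(j)})/(u_{σ(i)} − u_{σ(j)}) = [n]_q!, where [n]_q! = [n]_q[n−1]_q⋯[1]_q and [m]_q = (q^m − q^{−m})/(q − q^{−1}). -/
open Finset

section Aux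

open Polynomial

variable {K : Type*} [Field K] [DecidableEq K]

private lemma basis_coeff_top (s : Finset K) {y : K} (hy : y ∈ s) :
    (Lagrange.basis s id y).coeff (s.card - 1) = Lagrange.nodalWeight s id y := by
  have hb : Lagrange.basis s id y
      = C (Lagrange.nodalWeight s id y) * Lagrange.nodal (s.erase y) id := by
    rw [Lagrange.basis, Lagrange.nodalWeight, Lagrange.nodal, map_prod, ← prod_mul_distrib]
    rfl
  have hd : (Lagrange.nodal (s.erase y) id).natDegree = s.card - 1 := by
    rw [Lagrange.natDegree_nodal, card_erase_of_mem hy]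
  rw [hb, coeff_C_mul, ← hd, (Lagrange.nodal_monic).coeff_natDegree, mul_one]

private lemma L1 (s : Finset K) (f : K[X]) (h : f.degree < s.card) :
    ∑ y ∈ s, f.eval y * Lagrange.nodalWeight s id y = f.coeff (s.card - 1) := by
  have hI : (∑ y ∈ s, C (f.eval y) * Lagrange.basis s id y) = f := by
    simpa using (Lagrange.eq_interpolate (v := id) (s := s) (f := f) (Set.injOn_id _) h).symm
  conv_rhs => rw [← hI]
  rw [finset_sum_coeff]
  exact Finset.sum_congr rfl fun y hy => by
    rw [coeff_C_mul, basis_coeff_top s hy]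

private lemma key {n : ℕ} (x : Fin (n + 1) → K) (hx : Function.Injective x)
    (h0 : ∀ p, x p ≠ 0) {t : K} (ht1 : t ≠ 1) (ht0 : t ≠ 0) :
    ∑ p : Fin (n + 1), ∏ m ∈ univ.erase p, ((t * x p - x m) / (x p - x m))
      = (t ^ (n + 1) - 1) / (t - 1) := by
  set s : Finset K := image x univ with hs
  have hcard : s.card = n + 1 := by
    rw [hs, Finset.card_image_of_injective _ hx, card_univ, Fintype.card_fin]
  have hsne : ∀ y ∈ s, y ≠ 0 := by
    rintro y hy
    obtain ⟨p, -, rfl⟩ := Finset.mem_image.mp hy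
    exact h0 p
  have htm1 : t - 1 ≠ 0 := sub_ne_zero_of_ne ht1
  set g : K[X] := ∏ z ∈ s, (C t * X - C z) with hg
  have hfac : ∀ z : K, (C t * X - C z) = C t * X + C (-z) := fun z => by
    rw [map_neg]; ring
  have hfacdeg : ∀ z : K, (C t * X - C z).degree = 1 := fun z => by
    rw [hfac]; exact degree_linear ht0
  have hfacne : ∀ z ∈ s, (C t * X - C z) ≠ (0 : K[X]) := fun z _ => by
    intro h; simpa [h] using hfacdeg z
  have hgne : g ≠ 0 := prod_ne_zero_iff.mpr hfacne
  have hgdeg : g.degree = (n + 1 : ℕ) := by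
    rw [hg, degree_prod, Finset.sum_congr rfl fun z _ => hfacdeg z, Finset.sum_const, hcard]
    simp
  have hglead : g.leadingCoeff = t ^ (n + 1) := by
    calc g.leadingCoeff = ∏ z ∈ s, (C t * X - C z).leadingCoeff := by
          rw [hg, leadingCoeff_prod]
      _ = ∏ z ∈ s, t := Finset.prod_congr rfl fun z _ => by
          rw [hfac z]; exact leadingCoeff_linear ht0
      _ = t ^ (n + 1) := by rw [prod_const, hcard]
  set H : K[X] := g.divX with hH
  set c₀ : K := g.coeff 0 with hc₀
  have hc₀eval : c₀ = ∏ z ∈ s, (-z) := by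
    rw [hc₀, Polynomial.coeff_zero_eq_eval_zero, hg, eval_prod]
    exact Finset.prod_congr rfl fun z _ => by simp
  have hc₀ne : c₀ ≠ 0 := by
    rw [hc₀eval]
    exact prod_ne_zero_iff.mpr fun z hz => neg_ne_zero.mpr (hsne z hz)
  have hA : ∑ y ∈ s, H.eval y * Lagrange.nodalWeight s id y = t ^ (n + 1) := by
    have hd : H.degree < (s.card : WithBot ℕ) := by
      rw [hcard, ← hgdeg]
      exact degree_divX_lt hgne
    rw [L1 s H hd, hcard, Nat.add_sub_cancel, hH, coeff_divX, ← hglead,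
      Polynomial.leadingCoeff, natDegree_eq_of_degree_eq_some hgdeg]
  have h0s : (0 : K) ∉ s := fun h => hsne 0 h rfl
  have hB : ∑ y ∈ s, y⁻¹ * Lagrange.nodalWeight s id y = -c₀⁻¹ := by
    have hd : (1 : K[X]).degree < ((insert (0:K) s).card : WithBot ℕ) := by
      rw [card_insert_of_notMem h0s, degree_one, hcard]
      exact_mod_cast Nat.succ_pos _
    have h1 := L1 (insert (0:K) s) 1 hd
    rw [card_insert_of_notMem h0s, hcard, Nat.add_sub_cancel, Polynomial.coeff_one,
      if_neg (Nat.succ_ne_zero n)] at h1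
    rw [Finset.sum_insert h0s] at h1
    have hW0 : (1 : K[X]).eval 0 * Lagrange.nodalWeight (insert 0 s) id 0 = c₀⁻¹ := by
      rw [eval_one, one_mul, Lagrange.nodalWeight, Finset.erase_insert h0s, hc₀eval,
        ← prod_inv_distrib]
      exact Finset.prod_congr rfl fun z _ => by simp
    have hWy : ∀ y ∈ s, (1 : K[X]).eval y * Lagrange.nodalWeight (insert 0 s) id y
        = y⁻¹ * Lagrange.nodalWeight s id y := by
      intro y hy
      rw [eval_one, one_mul, Lagrange.nodalWeight, Lagrange.nodalWeight,
        Finset.erase_insert_of_ne (hsne y hy).symm,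
        Finset.prod_insert (fun h => h0s (Finset.mem_of_mem_erase h))]
      simp
    rw [hW0, Finset.sum_congr rfl hWy] at h1
    linear_combination h1
  have hrel : ∀ y ∈ s, (∏ z ∈ s.erase y, (t * y - z)) * ((t - 1) * y) = y * H.eval y + c₀ := by
    intro y hy
    have h1 : y * H.eval y + c₀ =
        g.eval y :=
      calc y * H.eval y + c₀ = eval y (X * g.divX + C (g.coeff 0)) := by
            simp only [eval_add, eval_mul, eval_X, eval_C, hH, hc₀]
        _ = g.eval y := by rw [X_mul_divX_add]
    have h2 : g.eval y = (t * y - y) * ∏ z ∈ s.erase y, (t * y - z) := by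
      rw [hg, eval_prod, ← Finset.mul_prod_erase s _ hy]
      simp
    rw [h1, h2]; ring
  have hterm : ∀ y ∈ s, (∏ z ∈ s.erase y, (t * y - z)) * Lagrange.nodalWeight s id y
      = (t - 1)⁻¹ * (H.eval y * Lagrange.nodalWeight s id y
        + c₀ * (y⁻¹ * Lagrange.nodalWeight s id y)) := by
    intro y hy
    have hy0 : y ≠ 0 := hsne y hy
    have h := hrel y hy
    field_simp
    linear_combination (Lagrange.nodalWeight s id y) * h
  have hstep : ∀ p : Fin (n + 1),
      (∏ m ∈ univ.erase p, ((t * x p - x m) / (x p - x m)))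
        = (∏ z ∈ s.erase (x p), (t * x p - z)) * Lagrange.nodalWeight s id (x p) := by
    intro p
    have him : s.erase (x p) = image x (univ.erase p) := by
      rw [hs, ← Finset.image_erase hx]
    rw [Lagrange.nodalWeight, him, Finset.prod_image (fun a _ b _ h => hx h),
        Finset.prod_image (fun a _ b _ h => hx h), ← prod_mul_distrib]
    exact Finset.prod_congr rfl fun m _ => by rw [div_eq_mul_inv]; rfl
  rw [Finset.sum_congr rfl fun p _ => hstep p]
  have hsum := (Finset.sum_image (s := (univ : Finset (Fin (n + 1)))) (g := x)
    (f := fun y => (∏ z ∈ s.erase y, (t * y - z)) * Lagrange.nodalWeight s id y)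
    (fun a _ b _ h => hx h)).symm
  rw [hsum, ← hs, Finset.sum_congr rfl hterm, ← mul_sum, sum_add_distrib, ← mul_sum, hA, hB]
  field_simp
  ring

private lemma main_sum (t : K) (ht1 : t ≠ 1) (ht0 : t ≠ 0) :
    ∀ (n : ℕ) (x : Fin n → K), Function.Injective x → (∀ p, x p ≠ 0) →
    (∑ σ : Equiv.Perm (Fin n), ∏ i : Fin n, ∏ j ∈ Ioi i,
        (t * x (σ i) - x (σ j)) / (x (σ i) - x (σ j)))
      = ∏ m ∈ range n, (t ^ (m + 1) - 1) / (t - 1) := by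
  intro n
  induction n with
  | zero => intro x _ _; simp
  | succ n ih =>
    intro x hx h0
    set Cn := ∏ m ∈ range n, (t ^ (m + 1) - 1) / (t - 1) with hCn
    have hy_inj : ∀ p : Fin (n + 1),
        Function.Injective (fun l : Fin n => x (Equiv.swap 0 p l.succ)) :=
      fun p a b hab => Fin.succ_injective _ ((Equiv.swap 0 p).injective (hx hab))
    have himg : ∀ (p : Fin (n + 1)) (G : Fin (n + 1) → K),
        (∏ l : Fin n, G (Equiv.swap 0 p l.succ)) = ∏ m ∈ univ.erase p, G m := by
      intro p G
      have hemb : Function.Injective (fun l : Fin n => Equiv.swap 0 p l.succ) :=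
        fun a b hab => Fin.succ_injective _ ((Equiv.swap 0 p).injective hab)
      have hmap : (univ : Finset (Fin n)).map ⟨_, hemb⟩ = univ.erase p := by
        apply Finset.eq_of_subset_of_card_le
        · intro m hm
          simp only [Finset.mem_map, Function.Embedding.coeFn_mk] at hm
          obtain ⟨l, -, rfl⟩ := hm
          refine Finset.mem_erase.mpr ⟨?_, Finset.mem_univ _⟩
          intro hc
          exact (Fin.succ_ne_zero l)
            ((Equiv.swap 0 p).injective (hc.trans (Equiv.swap_apply_left 0 p).symm))
        · rw [Finset.card_erase_of_mem (mem_univ p), Finset.card_map]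
          simp
      rw [← hmap, Finset.prod_map]
      rfl
    have hsummand : ∀ (p : Fin (n + 1)) (e : Equiv.Perm (Fin n)),
        (∏ i : Fin (n + 1), ∏ j ∈ Ioi i,
          (t * x (Equiv.Perm.decomposeFin.symm (p, e) i)
              - x (Equiv.Perm.decomposeFin.symm (p, e) j))
            / (x (Equiv.Perm.decomposeFin.symm (p, e) i)
              - x (Equiv.Perm.decomposeFin.symm (p, e) j)))
        = (∏ m ∈ univ.erase p, (t * x p - x m) / (x p - x m))
          * ∏ i : Fin n, ∏ j ∈ Ioi i,
              (t * x (Equiv.swap 0 p (e i).succ) - x (Equiv.swap 0 p (e j).succ))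
                / (x (Equiv.swap 0 p (e i).succ) - x (Equiv.swap 0 p (e j).succ)) := by
      intro p e
      rw [Fin.prod_univ_succ]
      congr 1
      · rw [Fin.prod_Ioi_zero]
        simp only [Equiv.Perm.decomposeFin_symm_apply_zero,
          Equiv.Perm.decomposeFin_symm_apply_succ]
        rw [← himg p (fun m => (t * x p - x m) / (x p - x m))]
        exact Equiv.prod_comp e (fun l =>
          (t * x p - x (Equiv.swap 0 p l.succ)) / (x p - x (Equiv.swap 0 p l.succ)))
      · refine Finset.prod_congr rfl fun i _ => ?_
        rw [Fin.prod_Ioi_succ]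
        exact Finset.prod_congr rfl fun j _ => by
          simp [Equiv.Perm.decomposeFin_symm_apply_succ]
    rw [← Equiv.sum_comp (Equiv.Perm.decomposeFin.symm) _, Fintype.sum_prod_type]
    have hinner : ∀ p : Fin (n + 1), ∑ e : Equiv.Perm (Fin n),
        (∏ i : Fin n, ∏ j ∈ Ioi i,
          (t * x (Equiv.swap 0 p (e i).succ) - x (Equiv.swap 0 p (e j).succ))
            / (x (Equiv.swap 0 p (e i).succ) - x (Equiv.swap 0 p (e j).succ))) = Cn :=
      fun p => ih (fun l => x (Equiv.swap 0 p l.succ)) (hy_inj p) (fun l => h0 _)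
    calc (∑ p : Fin (n + 1), ∑ e : Equiv.Perm (Fin n),
          ∏ i : Fin (n + 1), ∏ j ∈ Ioi i,
            (t * x (Equiv.Perm.decomposeFin.symm (p, e) i)
                - x (Equiv.Perm.decomposeFin.symm (p, e) j))
              / (x (Equiv.Perm.decomposeFin.symm (p, e) i)
                - x (Equiv.Perm.decomposeFin.symm (p, e) j)))
        = ∑ p : Fin (n + 1),
            (∏ m ∈ univ.erase p, (t * x p - x m) / (x p - x m)) * Cn := by
          refine Finset.sum_congr rfl fun p _ => ?_
          rw [Finset.sum_congr rfl fun e _ => hsummand p e, ← Finset.mul_sum, hinner p]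
      _ = (∑ p : Fin (n + 1), ∏ m ∈ univ.erase p, (t * x p - x m) / (x p - x m)) * Cn := by
          rw [Finset.sum_mul]
      _ = ((t ^ (n + 1) - 1) / (t - 1)) * Cn := by rw [key x hx h0 ht1 ht0]
      _ = ∏ m ∈ range (n + 1), (t ^ (m + 1) - 1) / (t - 1) := by
          rw [prod_range_succ, mul_comm]

end Aux

/-- The symmetric q-factorial `[n]_q! = ∏_{m=1}^n (q^m − q^{−m})/(q − q^{−1})`. -/
noncomputable def qfactorial (n : ℕ) (q : Kqu n) : Kqu n :=
  ∏ m ∈ Finset.range n, (q ^ (m + 1) - q⁻¹ ^ (m + 1)) / (q - q⁻¹)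

/-- `Σ_{σ∈Sₙ} ∏_{i<j} (q u_{σ(i)} − q⁻¹ u_{σ(j)})/(u_{σ(i)} − u_{σ(j)}) = [n]_q!`. -/
theorem sum_over_Sn_eq_qfactorial (n : ℕ) :
    (∑ σ : Equiv.Perm (Fin n), ∏ i : Fin n, ∏ j ∈ Finset.Ioi i,
        (qgen n * ugen n (σ i) - (qgen n)⁻¹ * ugen n (σ j)) /
          (ugen n (σ i) - ugen n (σ j))) =
      qfactorial n (qgen n) := by
  classical
  have halg : Function.Injective (algebraMap (MvPolynomial (Option (Fin n)) ℚ) (Kqu n)) :=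
    IsFractionRing.injective _ _
  have hq0 : qgen n ≠ 0 := by
    intro h
    have h1 : (MvPolynomial.X none : MvPolynomial (Option (Fin n)) ℚ) = 0 :=
      halg (by simpa [qgen] using h)
    have h2 := congrArg (MvPolynomial.eval (fun _ => (2:ℚ))) h1
    norm_num at h2
  have hq21 : (qgen n) ^ 2 ≠ 1 := by
    intro h
    have h1 : ((MvPolynomial.X none : MvPolynomial (Option (Fin n)) ℚ)) ^ 2 = 1 := by
      apply halg
      rw [map_pow, map_one]
      simpa [qgen] using h
    have h2 := congrArg (MvPolynomial.eval (fun _ => (2:ℚ))) h1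
    norm_num at h2
  have hq20 : (qgen n) ^ 2 ≠ 0 := pow_ne_zero _ hq0
  have hu_inj : Function.Injective (ugen n) := by
    intro i j hij
    have h1 := halg (show _ = _ from hij)
    have h2 := MvPolynomial.X_injective h1
    exact Option.some_injective _ h2
  have hu0 : ∀ i, ugen n i ≠ 0 := by
    intro i h
    have h1 : (MvPolynomial.X (some i) : MvPolynomial (Option (Fin n)) ℚ) = 0 :=
      halg (by simpa [ugen] using h)
    have h2 := congrArg (MvPolynomial.eval (fun _ => (2:ℚ))) h1
    norm_num at h2
  set q : Kqu n := qgen n with hqdef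
  have hq2m1 : q ^ 2 - 1 ≠ 0 := sub_ne_zero_of_ne hq21
  have hqq : q - q⁻¹ ≠ 0 := by
    have hmul : (q - q⁻¹) * q = q ^ 2 - 1 := by
      field_simp
    intro h
    rw [h, zero_mul] at hmul
    exact hq2m1 hmul.symm
  have hE : (∑ i : Fin n, (Ioi i).card) = ∑ m ∈ range n, m :=
    calc (∑ i : Fin n, (Ioi i).card) = ∑ i : Fin n, (n - 1 - (i : ℕ)) :=
          Finset.sum_congr rfl fun i _ => Fin.card_Ioi i
      _ = ∑ k ∈ range n, (n - 1 - k) := Fin.sum_univ_eq_sum_range _ n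
      _ = ∑ k ∈ range n, k := Finset.sum_range_reflect (fun j => j) n
  have hfac2 : ∀ m : ℕ, (q ^ (m + 1) - q⁻¹ ^ (m + 1)) / (q - q⁻¹)
      = q⁻¹ ^ m * (((q ^ 2) ^ (m + 1) - 1) / (q ^ 2 - 1)) := by
    intro m
    rw [← mul_div_assoc, div_eq_div_iff hqq hq2m1]
    simp only [inv_pow]
    field_simp
    ring
  have hterm : ∀ a b : Kqu n,
      (q * a - q⁻¹ * b) / (a - b) = q⁻¹ * ((q ^ 2 * a - b) / (a - b)) := by
    intro a b
    rw [← mul_div_assoc]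
    congr 1
    field_simp
  have hL : ∀ σ : Equiv.Perm (Fin n),
      (∏ i : Fin n, ∏ j ∈ Ioi i,
        (q * ugen n (σ i) - q⁻¹ * ugen n (σ j)) / (ugen n (σ i) - ugen n (σ j)))
      = q⁻¹ ^ (∑ i : Fin n, (Ioi i).card)
        * ∏ i : Fin n, ∏ j ∈ Ioi i,
            (q ^ 2 * ugen n (σ i) - ugen n (σ j)) / (ugen n (σ i) - ugen n (σ j)) := by
    intro σ
    rw [← Finset.prod_pow_eq_pow_sum, ← Finset.prod_mul_distrib]
    refine Finset.prod_congr rfl fun i _ => ?_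
    rw [← Finset.prod_const, ← Finset.prod_mul_distrib]
    exact Finset.prod_congr rfl fun j _ => hterm _ _
  rw [Finset.sum_congr rfl fun σ _ => hL σ, ← Finset.mul_sum,
    main_sum (q ^ 2) hq21 hq20 n (ugen n) hu_inj hu0]
  simp only [qfactorial]
  rw [Finset.prod_congr rfl fun m (_ : m ∈ range n) => hfac2 m,
    Finset.prod_mul_distrib, Finset.prod_pow_eq_pow_sum, hE]
end
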